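/- arXiv:2504.06054 — 2 statements merged into one kernel-verified Lean document; each statement's English description precedes it below -/
import Mathlib

section
/- Let Γ be a group generated by a finite set S, and for a function L : Γ → ℝ define δL(a,b) = L(ab) - L(a) - L(b) and the norm ‖L‖_S = sup_{s ∈ S ∪ {1}} |L(s)| + sup_{a,b ∈ Γ} |δL(a,b)|. Then ‖·‖_S is a norm on the space QM(Γ) of quasimorphisms (functions with sup|δL| < ∞), and (QM(Γ), ‖·‖_S) is a Banach space. -/
/-!
Since `S` generates `Γ`, the defect bound propagates control from `S ∪ {1}` to all of `Γ`:
writing `g` as a word in `S`, one gets `|L g| ≤ c_g ‖L‖_S` for every quasimorphism `L`.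
This gives definiteness, and turns a `‖·‖_S`-Cauchy sequence into a pointwise Cauchy sequence.
Its pointwise limit is the norm limit, because `|L s| + |L(ab) - L(a) - L(b)|` involves only
finitely many values of `L`, so bounds on it pass to pointwise limits.
-/

/-- A quasimorphism: a real-valued function on a group with uniformly bounded defect. -/
def IsQuasimorphism {Γ : Type*} [Group Γ] (L : Γ → ℝ) : Prop :=
  ∃ C : ℝ, ∀ g h : Γ, |L (g * h) - L g - L h| ≤ C

/-- The defect seminorm `‖δL‖ = sup_{a,b} |L(ab) - L(a) - L(b)|`. -/
noncomputable def qmDefect {Γ : Type*} [Group Γ] (L : Γ → ℝ) : ℝ :=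
  ⨆ p : Γ × Γ, |L (p.1 * p.2) - L p.1 - L p.2|

/-- The norm `‖L‖_S = sup_{s ∈ S ∪ {1}} |L(s)| + ‖δL‖`. -/
noncomputable def qmNorm {Γ : Type*} [Group Γ] (S : Finset Γ) (L : Γ → ℝ) : ℝ :=
  (⨆ s ∈ insert (1 : Γ) (S : Set Γ), |L s|) + qmDefect L

theorem Set.Finite.le_biSup {α β : Type*} [ConditionallyCompleteLattice β] {A : Set α}
    (hA : A.Finite) (g : α → β) {a : α} (ha : a ∈ A) : g a ≤ ⨆ t ∈ A, g t := by
  have hbdd : BddAbove (Set.range fun t => ⨆ _ : t ∈ A, g t) := by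
    refine ((hA.image g).insert (sSup ∅)).bddAbove.mono ?_
    rintro _ ⟨t, rfl⟩
    by_cases ht : t ∈ A
    · simpa [ht] using Or.inr ⟨t, ht, rfl⟩
    · simp [ht, iSup, Set.range_eq_empty]
  exact (ciSup_pos ha).symm.le.trans (le_ciSup hbdd a)

section Quasimorphism

variable {Γ : Type*} [Group Γ]

theorem IsQuasimorphism.sub {L L' : Γ → ℝ} (hL : IsQuasimorphism L)
    (hL' : IsQuasimorphism L') : IsQuasimorphism (L - L') := by
  obtain ⟨C, hC⟩ := hL
  obtain ⟨C', hC'⟩ := hL'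
  refine ⟨C + C', fun a b => ?_⟩
  calc |(L - L') (a * b) - (L - L') a - (L - L') b|
      = |(L (a * b) - L a - L b) - (L' (a * b) - L' a - L' b)| := by
        simp only [Pi.sub_apply]; ring_nf
    _ ≤ C + C' := (abs_sub _ _).trans (add_le_add (hC a b) (hC' a b))

theorem qmDefect_nonneg (L : Γ → ℝ) : 0 ≤ qmDefect L :=
  Real.iSup_nonneg fun _ => abs_nonneg _

theorem abs_le_qmDefect {L : Γ → ℝ} (hL : IsQuasimorphism L) (a b : Γ) :
    |L (a * b) - L a - L b| ≤ qmDefect L := by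
  obtain ⟨C, hC⟩ := hL
  exact le_ciSup (f := fun p : Γ × Γ => |L (p.1 * p.2) - L p.1 - L p.2|)
    ⟨C, by rintro _ ⟨p, rfl⟩; exact hC p.1 p.2⟩ (a, b)

theorem qmDefect_le {L : Γ → ℝ} {m : ℝ} (hm : 0 ≤ m)
    (h : ∀ a b, |L (a * b) - L a - L b| ≤ m) : qmDefect L ≤ m :=
  Real.iSup_le (fun p => h p.1 p.2) hm

theorem qmDefect_add_le {L L' : Γ → ℝ} (hL : IsQuasimorphism L) (hL' : IsQuasimorphism L') :
    qmDefect (L + L') ≤ qmDefect L + qmDefect L' := by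
  refine qmDefect_le (add_nonneg (qmDefect_nonneg L) (qmDefect_nonneg L')) fun a b => ?_
  calc |(L + L') (a * b) - (L + L') a - (L + L') b|
      = |(L (a * b) - L a - L b) + (L' (a * b) - L' a - L' b)| := by
        simp only [Pi.add_apply]; ring_nf
    _ ≤ qmDefect L + qmDefect L' :=
      (abs_add_le _ _).trans (add_le_add (abs_le_qmDefect hL a b) (abs_le_qmDefect hL' a b))

theorem qmDefect_smul (c : ℝ) (L : Γ → ℝ) : qmDefect (c • L) = |c| * qmDefect L := by
  rw [qmDefect, qmDefect, Real.mul_iSup_of_nonneg (abs_nonneg c)]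
  simp only [Pi.smul_apply, smul_eq_mul, ← mul_sub, abs_mul]

noncomputable def qmGenSup (S : Finset Γ) (L : Γ → ℝ) : ℝ :=
  ⨆ s ∈ insert (1 : Γ) (S : Set Γ), |L s|

theorem qmNorm_eq_add (S : Finset Γ) (L : Γ → ℝ) : qmNorm S L = qmGenSup S L + qmDefect L :=
  rfl

variable {S : Finset Γ}

theorem qmGenSup_nonneg (L : Γ → ℝ) : 0 ≤ qmGenSup S L :=
  Real.iSup_nonneg fun _ => Real.iSup_nonneg fun _ => abs_nonneg _

theorem abs_le_qmGenSup (L : Γ → ℝ) {s : Γ} (hs : s ∈ insert (1 : Γ) (S : Set Γ)) :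
    |L s| ≤ qmGenSup S L :=
  (S.finite_toSet.insert 1).le_biSup (fun t => |L t|) hs

theorem qmGenSup_le {L : Γ → ℝ} {m : ℝ} (hm : 0 ≤ m)
    (h : ∀ s ∈ insert (1 : Γ) (S : Set Γ), |L s| ≤ m) : qmGenSup S L ≤ m :=
  Real.iSup_le (fun s => Real.iSup_le (h s) hm) hm

theorem qmGenSup_add_le (L L' : Γ → ℝ) : qmGenSup S (L + L') ≤ qmGenSup S L + qmGenSup S L' :=
  qmGenSup_le (add_nonneg (qmGenSup_nonneg L) (qmGenSup_nonneg L')) fun _ hs =>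
    (abs_add_le _ _).trans (add_le_add (abs_le_qmGenSup L hs) (abs_le_qmGenSup L' hs))

theorem qmGenSup_smul (c : ℝ) (L : Γ → ℝ) : qmGenSup S (c • L) = |c| * qmGenSup S L := by
  simp only [qmGenSup, Real.mul_iSup_of_nonneg (abs_nonneg c), Pi.smul_apply, smul_eq_mul,
    abs_mul]

theorem qmNorm_nonneg (L : Γ → ℝ) : 0 ≤ qmNorm S L :=
  add_nonneg (qmGenSup_nonneg L) (qmDefect_nonneg L)

theorem abs_le_qmNorm (L : Γ → ℝ) {s : Γ} (hs : s ∈ insert (1 : Γ) (S : Set Γ)) :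
    |L s| ≤ qmNorm S L :=
  (abs_le_qmGenSup L hs).trans (le_add_of_nonneg_right (qmDefect_nonneg L))

theorem abs_defect_le_qmNorm {L : Γ → ℝ} (hL : IsQuasimorphism L) (a b : Γ) :
    |L (a * b) - L a - L b| ≤ qmNorm S L :=
  (abs_le_qmDefect hL a b).trans (le_add_of_nonneg_left (qmGenSup_nonneg L))

theorem qmNorm_add_le {L L' : Γ → ℝ} (hL : IsQuasimorphism L) (hL' : IsQuasimorphism L') :
    qmNorm S (L + L') ≤ qmNorm S L + qmNorm S L' := by
  simp only [qmNorm_eq_add]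
  linarith [qmGenSup_add_le (S := S) L L', qmDefect_add_le hL hL']

theorem qmNorm_smul (c : ℝ) (L : Γ → ℝ) : qmNorm S (c • L) = |c| * qmNorm S L := by
  rw [qmNorm_eq_add, qmNorm_eq_add, qmGenSup_smul, qmDefect_smul, mul_add]

theorem qmNorm_zero : qmNorm S (0 : Γ → ℝ) = 0 := by
  simpa using qmNorm_smul (S := S) 0 (0 : Γ → ℝ)

theorem qmNorm_le_of_forall {L : Γ → ℝ} {m : ℝ}
    (h : ∀ s ∈ insert (1 : Γ) (S : Set Γ), ∀ a b, |L s| + |L (a * b) - L a - L b| ≤ m) :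
    qmNorm S L ≤ m := by
  have h1 : (1 : Γ) ∈ insert (1 : Γ) (S : Set Γ) := Set.mem_insert 1 _
  have hdefect : ∀ s ∈ insert (1 : Γ) (S : Set Γ), qmDefect L ≤ m - |L s| := fun s hs =>
    qmDefect_le (by linarith [h s hs 1 1, abs_nonneg (L (1 * 1) - L 1 - L 1)])
      fun a b => by linarith [h s hs a b]
  have hgen : qmGenSup S L ≤ m - qmDefect L :=
    qmGenSup_le (by linarith [hdefect 1 h1, abs_nonneg (L 1)])
      fun s hs => by linarith [hdefect s hs]
  rw [qmNorm_eq_add]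
  linarith

end Quasimorphism

section Generated

open Filter Topology

variable {Γ : Type*} [Group Γ] {S : Finset Γ}

theorem exists_abs_apply_le_mul_qmNorm (hS : Subgroup.closure (S : Set Γ) = ⊤) (g : Γ) :
    ∃ c : ℝ, 0 ≤ c ∧ ∀ L : Γ → ℝ, IsQuasimorphism L → |L g| ≤ c * qmNorm S L := by
  have hg : g ∈ Subgroup.closure (S : Set Γ) := hS ▸ Subgroup.mem_top g
  induction hg using Subgroup.closure_induction with
  | mem x hx =>
    exact ⟨1, zero_le_one, fun L _ => by
      simpa using abs_le_qmNorm L (Set.mem_insert_of_mem 1 hx)⟩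
  | one => exact ⟨1, zero_le_one, fun L _ => by simpa using abs_le_qmNorm L (Set.mem_insert 1 _)⟩
  | mul x y _ _ hx hy =>
    obtain ⟨cx, hcx, hx⟩ := hx
    obtain ⟨cy, hcy, hy⟩ := hy
    refine ⟨cx + cy + 1, by positivity, fun L hL => ?_⟩
    calc |L (x * y)| = |L x + L y + (L (x * y) - L x - L y)| := by ring_nf
      _ ≤ |L x| + |L y| + |L (x * y) - L x - L y| := abs_add_three _ _ _
      _ ≤ cx * qmNorm S L + cy * qmNorm S L + qmNorm S L :=
        add_le_add (add_le_add (hx L hL) (hy L hL)) (abs_defect_le_qmNorm hL x y)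
      _ = (cx + cy + 1) * qmNorm S L := by ring
  | inv x _ hx =>
    obtain ⟨cx, hcx, hx⟩ := hx
    refine ⟨cx + 2, by positivity, fun L hL => ?_⟩
    calc |L x⁻¹| = |L 1 + -L x + -(L (x * x⁻¹) - L x - L x⁻¹)| := by
          rw [mul_inv_cancel]; ring_nf
      _ ≤ |L 1| + |L x| + |L (x * x⁻¹) - L x - L x⁻¹| := by
          simpa only [abs_neg] using abs_add_three (L 1) (-L x) (-(L (x * x⁻¹) - L x - L x⁻¹))
      _ ≤ qmNorm S L + cx * qmNorm S L + qmNorm S L :=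
        add_le_add (add_le_add (abs_le_qmNorm L (Set.mem_insert 1 _)) (hx L hL))
          (abs_defect_le_qmNorm hL x x⁻¹)
      _ = (cx + 2) * qmNorm S L := by ring

theorem eq_zero_of_qmNorm_eq_zero (hS : Subgroup.closure (S : Set Γ) = ⊤) {L : Γ → ℝ}
    (hL : IsQuasimorphism L) (h0 : qmNorm S L = 0) : L = 0 := by
  funext g
  obtain ⟨c, -, hc⟩ := exists_abs_apply_le_mul_qmNorm hS g
  simpa [h0] using hc L hL

theorem cauchySeq_apply_of_qmNorm (hS : Subgroup.closure (S : Set Γ) = ⊤) {Lseq : ℕ → Γ → ℝ}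
    (hqm : ∀ k, IsQuasimorphism (Lseq k))
    (hcau : ∀ ε : ℝ, 0 < ε → ∃ N : ℕ, ∀ j k : ℕ, N ≤ j → N ≤ k →
      qmNorm S (Lseq j - Lseq k) ≤ ε) (g : Γ) :
    CauchySeq fun k => Lseq k g := by
  obtain ⟨c, hc0, hc⟩ := exists_abs_apply_le_mul_qmNorm hS g
  refine Metric.cauchySeq_iff.2 fun ε hε => ?_
  obtain ⟨N, hN⟩ := hcau (ε / (c + 1)) (by positivity)
  refine ⟨N, fun j hj k hk => ?_⟩
  calc dist (Lseq j g) (Lseq k g) = |(Lseq j - Lseq k) g| := rfl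
    _ ≤ c * (ε / (c + 1)) :=
      (hc _ ((hqm j).sub (hqm k))).trans (mul_le_mul_of_nonneg_left (hN j k hj hk) hc0)
    _ < ε := by
      rw [mul_div_assoc', div_lt_iff₀ (by positivity)]
      linarith

theorem IsQuasimorphism.of_tendsto_of_qmNorm_le {M : ℕ → Γ → ℝ} {L : Γ → ℝ} {ε : ℝ}
    (hM : ∀ k, IsQuasimorphism (M k)) (hlim : ∀ g, Tendsto (fun k => M k g) atTop (𝓝 (L g)))
    (hε : ∀ᶠ k in atTop, qmNorm S (M k) ≤ ε) :
    IsQuasimorphism L ∧ qmNorm S L ≤ ε := by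
  have hbound : ∀ s ∈ insert (1 : Γ) (S : Set Γ), ∀ a b,
      |L s| + |L (a * b) - L a - L b| ≤ ε := fun s hs a b =>
    le_of_tendsto ((hlim s).abs.add (((hlim (a * b)).sub (hlim a)).sub (hlim b)).abs)
      (hε.mono fun k hk =>
        (add_le_add (abs_le_qmGenSup (M k) hs) (abs_le_qmDefect (hM k) a b)).trans hk)
  exact ⟨⟨ε, fun a b => by linarith [hbound 1 (Set.mem_insert 1 _) a b, abs_nonneg (L 1)]⟩,
    qmNorm_le_of_forall hbound⟩

theorem exists_tendsto_qmNorm_of_cauchy (hS : Subgroup.closure (S : Set Γ) = ⊤)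
    {Lseq : ℕ → Γ → ℝ} (hqm : ∀ k, IsQuasimorphism (Lseq k))
    (hcau : ∀ ε : ℝ, 0 < ε → ∃ N : ℕ, ∀ j k : ℕ, N ≤ j → N ≤ k →
      qmNorm S (Lseq j - Lseq k) ≤ ε) :
    ∃ L : Γ → ℝ, IsQuasimorphism L ∧ Tendsto (fun k => qmNorm S (Lseq k - L)) atTop (𝓝 0) := by
  choose L hL using fun g =>
    cauchySeq_tendsto_of_complete (cauchySeq_apply_of_qmNorm hS hqm hcau g)
  have hclose : ∀ ε : ℝ, 0 < ε → ∃ N : ℕ, ∀ j, N ≤ j →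
      IsQuasimorphism (Lseq j - L) ∧ qmNorm S (Lseq j - L) ≤ ε := fun ε hε => by
    obtain ⟨N, hN⟩ := hcau ε hε
    exact ⟨N, fun j hj => IsQuasimorphism.of_tendsto_of_qmNorm_le (fun k => (hqm j).sub (hqm k))
      (fun g => (hL g).const_sub (Lseq j g))
      ((eventually_ge_atTop N).mono fun k hk => hN j k hj hk)⟩
  obtain ⟨N, hN⟩ := hclose 1 one_pos
  refine ⟨L, by simpa using (hqm N).sub (hN N le_rfl).1, tendsto_order.2 ⟨fun a ha =>
    Eventually.of_forall fun _ => ha.trans_le (qmNorm_nonneg _), fun a ha => ?_⟩⟩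
  obtain ⟨N', hN'⟩ := hclose (a / 2) (half_pos ha)
  exact eventually_atTop.2 ⟨N', fun j hj => (hN' j hj).2.trans_lt (half_lt_self ha)⟩

end Generated

/-- For a group `Γ` generated by a finite set `S`, `‖·‖_S` is a norm on the space of
quasimorphisms, and the space of quasimorphisms equipped with it is a Banach space
(norm axioms plus completeness). -/
theorem quasimorphisms_banach {Γ : Type*} [Group Γ] (S : Finset Γ)
    (hS : Subgroup.closure (S : Set Γ) = ⊤) :
    (∀ L : Γ → ℝ, IsQuasimorphism L → 0 ≤ qmNorm S L) ∧
    (∀ L : Γ → ℝ, IsQuasimorphism L → (qmNorm S L = 0 ↔ L = 0)) ∧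
    (∀ L L' : Γ → ℝ, IsQuasimorphism L → IsQuasimorphism L' →
      qmNorm S (L + L') ≤ qmNorm S L + qmNorm S L') ∧
    (∀ (c : ℝ) (L : Γ → ℝ), IsQuasimorphism L → qmNorm S (c • L) = |c| * qmNorm S L) ∧
    (∀ Lseq : ℕ → Γ → ℝ, (∀ k, IsQuasimorphism (Lseq k)) →
      (∀ ε : ℝ, 0 < ε → ∃ N : ℕ, ∀ j k : ℕ, N ≤ j → N ≤ k →
        qmNorm S (Lseq j - Lseq k) ≤ ε) →
      ∃ L : Γ → ℝ, IsQuasimorphism L ∧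
        Filter.Tendsto (fun k => qmNorm S (Lseq k - L)) Filter.atTop (nhds 0)) := by
  refine ⟨fun L _ => qmNorm_nonneg L, fun L hL => ⟨eq_zero_of_qmNorm_eq_zero hS hL, ?_⟩,
    fun L L' hL hL' => qmNorm_add_le hL hL', fun c L _ => qmNorm_smul c L,
    fun Lseq hqm hcau => exists_tendsto_qmNorm_of_cauchy hS hqm hcau⟩
  rintro rfl
  exact qmNorm_zero
end

section
/- Let Σ be a subshift of finite type with shift τ, fix a full-support invariant probability μ, and for ε = constant, define Bow_μ(Σ) as the space of μ-weak Bowen functions φ ∈ L^∞(μ) (there exists C > 0 such that for μ-a.e. x, y with y ∈ [x]_n one has |S_n φ(x) - S_n φ(y)| ≤ C for all n), with norm ⦀φ⦀_B = ‖φ‖_{L^∞} + ‖φ‖_B where ‖φ‖_B = inf C. Then (Bow_μ(Σ), ⦀·⦀_B) is a Banach space. -/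
/-!
The `L^∞` part of `⦀·⦀_B` is complete because `L^∞(μ)` is. For the Bowen part two facts
do the work. The infimum of the weak Bowen constants is itself one, since it is the limit of
countably many of them. And a weak Bowen constant passes to a limit `φ = lim φ_k` as soon as
`φ_k → φ` pointwise along `μ`-almost every orbit, because Birkhoff sums are finite sums along
orbits; as the shift is non-singular, `L^∞`-convergence gives exactly that. So the `L^∞`-limit of
a `⦀·⦀_B`-Cauchy sequence is weak Bowen, and the sequence converges to it in `⦀·⦀_B`.
-/

open MeasureTheory

variable {A : Type*} [MeasurableSpace A]

/-- Admissibility of a sequence with respect to the transition relation `R`. -/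
def Adm (R : A → A → Prop) (x : ℕ → A) : Prop := ∀ n : ℕ, R (x n) (x (n + 1))

/-- The subshift of finite type determined by `R`. -/
def SFT (R : A → A → Prop) : Type _ := {x : ℕ → A // Adm R x}

instance (R : A → A → Prop) : MeasurableSpace (SFT R) :=
  Subtype.instMeasurableSpace

/-- The shift map on the subshift. -/
def shftS (R : A → A → Prop) : SFT R → SFT R :=
  fun x => ⟨fun n => x.1 (n + 1), fun n => x.2 (n + 1)⟩

/-- Birkhoff sums on the subshift. -/
def birk (R : A → A → Prop) (φ : SFT R → ℝ) (n : ℕ) (x : SFT R) : ℝ :=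
  ∑ k ∈ Finset.range n, φ ((shftS R)^[k] x)

/-- `C` is a weak Bowen constant for `φ`: for `μ⊗μ`-a.e. pair `(x,y)` and every `n`,
if `x` and `y` agree in coordinates `< n` then `|S_n φ(x) - S_n φ(y)| ≤ C`. -/
def IsBowenConst (R : A → A → Prop) (μ : Measure (SFT R)) (φ : SFT R → ℝ) (C : ℝ) : Prop :=
  ∀ᵐ p ∂(μ.prod μ), ∀ n : ℕ, 1 ≤ n → (∀ i : ℕ, i < n → p.1.1 i = p.2.1 i) →
    |birk R φ n p.1 - birk R φ n p.2| ≤ C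

/-- A `μ`-weak Bowen function: essentially bounded with some weak Bowen constant. -/
def MemBow (R : A → A → Prop) (μ : Measure (SFT R)) (φ : SFT R → ℝ) : Prop :=
  MemLp φ ⊤ μ ∧ ∃ C : ℝ, 0 ≤ C ∧ IsBowenConst R μ φ C

/-- The Bowen seminorm `‖φ‖_B = inf C`. -/
noncomputable def bowenSemi (R : A → A → Prop) (μ : Measure (SFT R)) (φ : SFT R → ℝ) : ℝ :=
  sInf {C : ℝ | 0 ≤ C ∧ IsBowenConst R μ φ C}

/-- The Bowen norm `⦀φ⦀_B = ‖φ‖_{L^∞} + ‖φ‖_B`. -/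
noncomputable def bowenNorm (R : A → A → Prop) (μ : Measure (SFT R)) (φ : SFT R → ℝ) : ℝ :=
  (eLpNorm φ ⊤ μ).toReal + bowenSemi R μ φ

open Filter Topology

section

variable {α E : Type*} [MeasurableSpace α] {μ : Measure α} [NormedAddCommGroup E]

theorem exists_memLp_tendsto_eLpNorm_of_cauchy [CompleteSpace E] {p : ENNReal} [Fact (1 ≤ p)]
    {f : ℕ → α → E} (hf : ∀ k, MemLp (f k) p μ)
    (hcau : ∀ ε > 0, ∃ N, ∀ j k, N ≤ j → N ≤ k → (eLpNorm (f j - f k) p μ).toReal ≤ ε) :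
    ∃ g, MemLp g p μ ∧ Tendsto (fun k => eLpNorm (f k - g) p μ) atTop (𝓝 0) := by
  have hcauchy : CauchySeq fun k => (hf k).toLp (f k) := by
    refine Metric.cauchySeq_iff.2 fun ε hε => ?_
    obtain ⟨N, hN⟩ := hcau (ε / 2) (half_pos hε)
    refine ⟨N, fun j hj k hk => ?_⟩
    rw [dist_edist, Lp.edist_toLp_toLp]
    exact (hN j k hj hk).trans_lt (half_lt_self hε)
  obtain ⟨g, hg⟩ := cauchySeq_tendsto_of_complete hcauchy
  refine ⟨g, Lp.memLp g, ?_⟩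
  rw [← Lp.toLp_coeFn g (Lp.memLp g)] at hg
  exact (Lp.tendsto_Lp_iff_tendsto_eLpNorm'' f hf _ _).1 hg

theorem ae_tendsto_of_tendsto_eLpNorm_top {f : ℕ → α → E} {g : α → E}
    (h : Tendsto (fun k => eLpNorm (f k - g) ⊤ μ) atTop (𝓝 0)) :
    ∀ᵐ x ∂μ, Tendsto (fun k => f k x) atTop (𝓝 (g x)) := by
  have hbound : ∀ᵐ x ∂μ, ∀ k, ‖f k x - g x‖ₑ ≤ eLpNorm (f k - g) ⊤ μ :=
    ae_all_iff.2 fun k => by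
      simpa only [eLpNorm_exponent_top, Pi.sub_apply] using ae_le_eLpNormEssSup (f := f k - g)
  filter_upwards [hbound] with x hx
  refine tendsto_iff_edist_tendsto_0.2 ?_
  simp only [edist_eq_enorm_sub]
  exact tendsto_of_tendsto_of_tendsto_of_le_of_le tendsto_const_nhds h (fun _ => zero_le) hx

theorem ae_forall_iterate {T : α → α} (hT : Measure.QuasiMeasurePreserving T μ μ)
    {P : α → Prop} (h : ∀ᵐ x ∂μ, P x) : ∀ᵐ x ∂μ, ∀ i, P (T^[i] x) :=
  ae_all_iff.2 fun i => (hT.iterate i).ae h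

theorem ae_fst_and_snd [SFinite μ] {P : α → Prop} (h : ∀ᵐ x ∂μ, P x) :
    ∀ᵐ p ∂(μ.prod μ), P p.1 ∧ P p.2 :=
  (Measure.quasiMeasurePreserving_fst.ae h).and (Measure.quasiMeasurePreserving_snd.ae h)

end

section Birkhoff

omit [MeasurableSpace A]

variable {R : A → A → Prop}

theorem birk_add (φ ψ : SFT R → ℝ) (n : ℕ) (x : SFT R) :
    birk R (φ + ψ) n x = birk R φ n x + birk R ψ n x := by
  simp only [birk, Pi.add_apply, Finset.sum_add_distrib]

theorem birk_sub (φ ψ : SFT R → ℝ) (n : ℕ) (x : SFT R) :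
    birk R (φ - ψ) n x = birk R φ n x - birk R ψ n x := by
  simp only [birk, Pi.sub_apply, Finset.sum_sub_distrib]

theorem birk_smul (c : ℝ) (φ : SFT R → ℝ) (n : ℕ) (x : SFT R) :
    birk R (c • φ) n x = c * birk R φ n x := by
  simp only [birk, Pi.smul_apply, smul_eq_mul, Finset.mul_sum]

theorem birk_zero (n : ℕ) (x : SFT R) : birk R 0 n x = 0 := by
  simp only [birk, Pi.zero_apply, Finset.sum_const_zero]

theorem birk_congr {φ ψ : SFT R → ℝ} {x : SFT R}
    (h : ∀ i, φ ((shftS R)^[i] x) = ψ ((shftS R)^[i] x)) (n : ℕ) : birk R φ n x = birk R ψ n x :=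
  Finset.sum_congr rfl fun i _ => h i

theorem tendsto_birk {ι : Type*} {l : Filter ι} {f : ι → SFT R → ℝ} {φ : SFT R → ℝ} {x : SFT R}
    (h : ∀ i, Tendsto (fun k => f k ((shftS R)^[i] x)) l (𝓝 (φ ((shftS R)^[i] x)))) (n : ℕ) :
    Tendsto (fun k => birk R (f k) n x) l (𝓝 (birk R φ n x)) :=
  tendsto_finsetSum _ fun i _ => h i

end Birkhoff

namespace IsBowenConst

variable {R : A → A → Prop} {μ : Measure (SFT R)} {φ ψ : SFT R → ℝ} {C D : ℝ}

theorem mono (h : IsBowenConst R μ φ C) (hCD : C ≤ D) : IsBowenConst R μ φ D :=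
  Eventually.mono h fun _ hp n hn hagree => (hp n hn hagree).trans hCD

theorem add (hφ : IsBowenConst R μ φ C) (hψ : IsBowenConst R μ ψ D) :
    IsBowenConst R μ (φ + ψ) (C + D) := by
  filter_upwards [hφ, hψ] with p hpφ hpψ n hn hagree
  rw [birk_add, birk_add, add_sub_add_comm]
  exact (abs_add_le _ _).trans (add_le_add (hpφ n hn hagree) (hpψ n hn hagree))

theorem sub (hφ : IsBowenConst R μ φ C) (hψ : IsBowenConst R μ ψ D) :
    IsBowenConst R μ (φ - ψ) (C + D) := by
  filter_upwards [hφ, hψ] with p hpφ hpψ n hn hagree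
  rw [birk_sub, birk_sub, sub_sub_sub_comm]
  exact (abs_sub _ _).trans (add_le_add (hpφ n hn hagree) (hpψ n hn hagree))

theorem smul (c : ℝ) (h : IsBowenConst R μ φ C) : IsBowenConst R μ (c • φ) (|c| * C) := by
  filter_upwards [h] with p hp n hn hagree
  rw [birk_smul, birk_smul, ← mul_sub, abs_mul]
  exact mul_le_mul_of_nonneg_left (hp n hn hagree) (abs_nonneg c)

theorem zero : IsBowenConst R μ 0 0 :=
  Eventually.of_forall fun _ n _ _ => by simp only [birk_zero, sub_self, abs_zero, le_refl]

theorem congr_ae [SFinite μ] (hτ : Measure.QuasiMeasurePreserving (shftS R) μ μ)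
    (h : IsBowenConst R μ φ C) (hφψ : φ =ᵐ[μ] ψ) : IsBowenConst R μ ψ C := by
  filter_upwards [h, ae_fst_and_snd (ae_forall_iterate hτ hφψ)] with p hp hpφψ n hn hagree
  rw [← birk_congr hpφψ.1, ← birk_congr hpφψ.2]
  exact hp n hn hagree

theorem of_tendsto [SFinite μ] (hτ : Measure.QuasiMeasurePreserving (shftS R) μ μ)
    {f : ℕ → SFT R → ℝ} (hf : ∀ᶠ k in atTop, IsBowenConst R μ (f k) C)
    (hlim : ∀ᵐ x ∂μ, Tendsto (fun k => f k x) atTop (𝓝 (φ x))) : IsBowenConst R μ φ C := by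
  obtain ⟨N, hN⟩ := eventually_atTop.1 hf
  have hall : ∀ᵐ p ∂(μ.prod μ), ∀ k, N ≤ k → ∀ n, 1 ≤ n → (∀ i, i < n → p.1.1 i = p.2.1 i) →
      |birk R (f k) n p.1 - birk R (f k) n p.2| ≤ C :=
    ae_all_iff.2 fun k => eventually_imp_distrib_left.2 (hN k)
  filter_upwards [hall, ae_fst_and_snd (ae_forall_iterate hτ hlim)] with p hp hpconv n hn hagree
  refine le_of_tendsto ((tendsto_birk hpconv.1 n).sub (tendsto_birk hpconv.2 n)).abs ?_
  filter_upwards [eventually_ge_atTop N] with k hk using hp k hk n hn hagree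

end IsBowenConst

section BowenNorm

variable {R : A → A → Prop} {μ : Measure (SFT R)} {φ ψ : SFT R → ℝ} {C : ℝ}

theorem bowenSemi_nonneg : 0 ≤ bowenSemi R μ φ :=
  Real.sInf_nonneg fun _ hC => hC.1

theorem bowenSemi_le (h0 : 0 ≤ C) (hC : IsBowenConst R μ φ C) : bowenSemi R μ φ ≤ C :=
  csInf_le ⟨0, fun _ hC => hC.1⟩ ⟨h0, hC⟩

theorem isBowenConst_bowenSemi (h : ∃ C, 0 ≤ C ∧ IsBowenConst R μ φ C) :
    IsBowenConst R μ φ (bowenSemi R μ φ) := by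
  obtain ⟨u, -, hu, hmem⟩ := exists_seq_tendsto_sInf h ⟨0, fun _ hC => hC.1⟩
  filter_upwards [ae_all_iff.2 fun m => (hmem m).2] with p hp n hn hagree
  exact ge_of_tendsto' hu fun m => hp m n hn hagree

theorem bowenSemi_add_le (hφ : ∃ C, 0 ≤ C ∧ IsBowenConst R μ φ C)
    (hψ : ∃ C, 0 ≤ C ∧ IsBowenConst R μ ψ C) :
    bowenSemi R μ (φ + ψ) ≤ bowenSemi R μ φ + bowenSemi R μ ψ :=
  bowenSemi_le (add_nonneg bowenSemi_nonneg bowenSemi_nonneg)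
    ((isBowenConst_bowenSemi hφ).add (isBowenConst_bowenSemi hψ))

theorem bowenSemi_smul_le (c : ℝ) (hφ : ∃ C, 0 ≤ C ∧ IsBowenConst R μ φ C) :
    bowenSemi R μ (c • φ) ≤ |c| * bowenSemi R μ φ :=
  bowenSemi_le (mul_nonneg (abs_nonneg c) bowenSemi_nonneg) ((isBowenConst_bowenSemi hφ).smul c)

theorem bowenSemi_smul (c : ℝ) (hφ : ∃ C, 0 ≤ C ∧ IsBowenConst R μ φ C) :
    bowenSemi R μ (c • φ) = |c| * bowenSemi R μ φ := by
  refine le_antisymm (bowenSemi_smul_le c hφ) ?_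
  rcases eq_or_ne c 0 with rfl | hc
  · simpa only [abs_zero, zero_mul] using bowenSemi_nonneg
  obtain ⟨C, hC0, hC⟩ := hφ
  have hcφ : ∃ C, 0 ≤ C ∧ IsBowenConst R μ (c • φ) C :=
    ⟨|c| * C, mul_nonneg (abs_nonneg c) hC0, hC.smul c⟩
  have h := bowenSemi_smul_le c⁻¹ hcφ
  rwa [inv_smul_smul₀ hc, abs_inv, le_inv_mul_iff₀ (abs_pos.2 hc)] at h

theorem bowenSemi_eq_zero_of_ae_eq_zero [SFinite μ]
    (hτ : Measure.QuasiMeasurePreserving (shftS R) μ μ) (h : φ =ᵐ[μ] 0) :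
    bowenSemi R μ φ = 0 :=
  le_antisymm (bowenSemi_le le_rfl (IsBowenConst.zero.congr_ae hτ h.symm)) bowenSemi_nonneg

theorem MemBow.add (hφ : MemBow R μ φ) (hψ : MemBow R μ ψ) : MemBow R μ (φ + ψ) := by
  obtain ⟨hφLp, C, hC0, hC⟩ := hφ
  obtain ⟨hψLp, D, hD0, hD⟩ := hψ
  exact ⟨hφLp.add hψLp, C + D, add_nonneg hC0 hD0, hC.add hD⟩

theorem MemBow.sub (hφ : MemBow R μ φ) (hψ : MemBow R μ ψ) : MemBow R μ (φ - ψ) := by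
  obtain ⟨hφLp, C, hC0, hC⟩ := hφ
  obtain ⟨hψLp, D, hD0, hD⟩ := hψ
  exact ⟨hφLp.sub hψLp, C + D, add_nonneg hC0 hD0, hC.sub hD⟩

theorem toReal_eLpNorm_le_bowenNorm : (eLpNorm φ ⊤ μ).toReal ≤ bowenNorm R μ φ :=
  le_add_of_nonneg_right bowenSemi_nonneg

theorem bowenSemi_le_bowenNorm : bowenSemi R μ φ ≤ bowenNorm R μ φ :=
  le_add_of_nonneg_left ENNReal.toReal_nonneg

theorem IsBowenConst.of_bowenNorm_le (hφ : MemBow R μ φ) (h : bowenNorm R μ φ ≤ C) :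
    IsBowenConst R μ φ C :=
  (isBowenConst_bowenSemi hφ.2).mono (bowenSemi_le_bowenNorm.trans h)

theorem bowenNorm_add_le (hφ : MemBow R μ φ) (hψ : MemBow R μ ψ) :
    bowenNorm R μ (φ + ψ) ≤ bowenNorm R μ φ + bowenNorm R μ ψ := by
  have hLinfty : (eLpNorm (φ + ψ) ⊤ μ).toReal ≤
      (eLpNorm φ ⊤ μ).toReal + (eLpNorm ψ ⊤ μ).toReal :=
    calc (eLpNorm (φ + ψ) ⊤ μ).toReal ≤ (eLpNorm φ ⊤ μ + eLpNorm ψ ⊤ μ).toReal :=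
          ENNReal.toReal_mono (ENNReal.add_ne_top.2 ⟨hφ.1.eLpNorm_ne_top, hψ.1.eLpNorm_ne_top⟩)
            (eLpNorm_add_le hφ.1.aestronglyMeasurable hψ.1.aestronglyMeasurable le_top)
      _ ≤ _ := ENNReal.toReal_add_le
  have hBowen := bowenSemi_add_le hφ.2 hψ.2
  unfold bowenNorm
  linarith

theorem bowenNorm_smul (c : ℝ) (hφ : MemBow R μ φ) :
    bowenNorm R μ (c • φ) = |c| * bowenNorm R μ φ := by
  rw [bowenNorm, bowenNorm, bowenSemi_smul c hφ.2, eLpNorm_const_smul, ENNReal.toReal_mul,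
    toReal_enorm, Real.norm_eq_abs, mul_add]

theorem bowenNorm_eq_zero_iff [SFinite μ] (hτ : Measure.QuasiMeasurePreserving (shftS R) μ μ)
    (hφ : MemBow R μ φ) : bowenNorm R μ φ = 0 ↔ φ =ᵐ[μ] 0 := by
  rw [← eLpNorm_eq_zero_iff hφ.1.aestronglyMeasurable ENNReal.top_ne_zero]
  constructor
  · intro h
    have hLinfty : (eLpNorm φ ⊤ μ).toReal = 0 :=
      le_antisymm (h ▸ toReal_eLpNorm_le_bowenNorm) ENNReal.toReal_nonneg
    exact (ENNReal.toReal_eq_zero_iff _).1 hLinfty |>.resolve_right hφ.1.eLpNorm_ne_top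
  · intro h
    rw [bowenNorm, h, bowenSemi_eq_zero_of_ae_eq_zero hτ
      ((eLpNorm_eq_zero_iff hφ.1.aestronglyMeasurable ENNReal.top_ne_zero).1 h),
      ENNReal.toReal_zero, add_zero]

end BowenNorm

theorem exists_memBow_tendsto_bowenNorm {R : A → A → Prop} {μ : Measure (SFT R)} [SFinite μ]
    (hτ : Measure.QuasiMeasurePreserving (shftS R) μ μ) {f : ℕ → SFT R → ℝ}
    (hf : ∀ k, MemBow R μ (f k))
    (hcau : ∀ ε > 0, ∃ N, ∀ j k, N ≤ j → N ≤ k → bowenNorm R μ (f j - f k) ≤ ε) :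
    ∃ φ, MemBow R μ φ ∧ Tendsto (fun k => bowenNorm R μ (f k - φ)) atTop (𝓝 0) := by
  obtain ⟨φ, hφLp, hLinfty⟩ := exists_memLp_tendsto_eLpNorm_of_cauchy (fun k => (hf k).1)
    fun ε hε => (hcau ε hε).imp fun N hN j k hj hk =>
      toReal_eLpNorm_le_bowenNorm.trans (hN j k hj hk)
  have hBowen : ∀ ε > 0, ∀ᶠ j in atTop, IsBowenConst R μ (f j - φ) ε := by
    intro ε hε
    obtain ⟨N, hN⟩ := hcau ε hε
    filter_upwards [eventually_ge_atTop N] with j hj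
    refine IsBowenConst.of_tendsto hτ (f := fun k => f j - f k) ?_ ?_
    · filter_upwards [eventually_ge_atTop N] with k hk
      exact IsBowenConst.of_bowenNorm_le ((hf j).sub (hf k)) (hN j k hj hk)
    · filter_upwards [ae_tendsto_of_tendsto_eLpNorm_top hLinfty] with x hx
      exact tendsto_const_nhds.sub hx
  have hφ : MemBow R μ φ := by
    obtain ⟨N, hN⟩ := (hBowen 1 one_pos).exists
    obtain ⟨C, hC0, hC⟩ := (hf N).2
    refine ⟨hφLp, C + 1, by positivity, ?_⟩
    simpa only [sub_sub_cancel] using hC.sub hN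
  have hsemi : Tendsto (fun k => bowenSemi R μ (f k - φ)) atTop (𝓝 0) :=
    tendsto_order.2 ⟨fun a ha => Eventually.of_forall fun _ => ha.trans_le bowenSemi_nonneg,
      fun a ha => (hBowen (a / 2) (half_pos ha)).mono fun _ hk =>
        (bowenSemi_le (half_pos ha).le hk).trans_lt (half_lt_self ha)⟩
  refine ⟨φ, hφ, ?_⟩
  simpa only [bowenNorm, Function.comp_def, ENNReal.toReal_zero, add_zero] using
    ((ENNReal.tendsto_toReal ENNReal.zero_ne_top).comp hLinfty).add hsemi

theorem weak_bowen_banach_general (R : A → A → Prop) (μ : Measure (SFT R))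
    [IsProbabilityMeasure μ] (hinv : MeasurePreserving (shftS R) μ μ) :
    (∀ φ : SFT R → ℝ, MemBow R μ φ → (bowenNorm R μ φ = 0 ↔ φ =ᵐ[μ] 0)) ∧
    (∀ φ ψ : SFT R → ℝ, MemBow R μ φ → MemBow R μ ψ →
      MemBow R μ (φ + ψ) ∧
      bowenNorm R μ (φ + ψ) ≤ bowenNorm R μ φ + bowenNorm R μ ψ) ∧
    (∀ (c : ℝ) (φ : SFT R → ℝ), MemBow R μ φ →
      bowenNorm R μ (c • φ) = |c| * bowenNorm R μ φ) ∧
    (∀ φseq : ℕ → SFT R → ℝ, (∀ k, MemBow R μ (φseq k)) →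
      (∀ ε : ℝ, 0 < ε → ∃ N : ℕ, ∀ j k : ℕ, N ≤ j → N ≤ k →
        bowenNorm R μ (φseq j - φseq k) ≤ ε) →
      ∃ φ : SFT R → ℝ, MemBow R μ φ ∧
        Filter.Tendsto (fun k => bowenNorm R μ (φseq k - φ)) Filter.atTop (nhds 0)) :=
  ⟨fun _ hφ => bowenNorm_eq_zero_iff hinv.quasiMeasurePreserving hφ,
    fun _ _ hφ hψ => ⟨hφ.add hψ, bowenNorm_add_le hφ hψ⟩,
    fun c _ hφ => bowenNorm_smul c hφ,
    fun _ hf hcau => exists_memBow_tendsto_bowenNorm hinv.quasiMeasurePreserving hf hcau⟩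

/-- The space of `μ`-weak Bowen functions on a subshift of finite type, with a fully
supported invariant probability `μ` and the norm `⦀φ⦀_B = ‖φ‖_{L^∞} + ‖φ‖_B`, is a
Banach space: the norm is definite (up to `μ`-a.e. equality), subadditive,
absolutely homogeneous, and the space is complete. -/
theorem weak_bowen_banach (R : A → A → Prop) (μ : Measure (SFT R))
    [IsProbabilityMeasure μ] (hinv : MeasurePreserving (shftS R) μ μ)
    (hfull : ∀ (n : ℕ) (w : Fin n → A),
      ({x : SFT R | ∀ i : Fin n, x.1 (i : ℕ) = w i}).Nonempty →
      0 < μ {x : SFT R | ∀ i : Fin n, x.1 (i : ℕ) = w i}) :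
    (∀ φ : SFT R → ℝ, MemBow R μ φ → (bowenNorm R μ φ = 0 ↔ φ =ᵐ[μ] 0)) ∧
    (∀ φ ψ : SFT R → ℝ, MemBow R μ φ → MemBow R μ ψ →
      MemBow R μ (φ + ψ) ∧
      bowenNorm R μ (φ + ψ) ≤ bowenNorm R μ φ + bowenNorm R μ ψ) ∧
    (∀ (c : ℝ) (φ : SFT R → ℝ), MemBow R μ φ →
      bowenNorm R μ (c • φ) = |c| * bowenNorm R μ φ) ∧
    (∀ φseq : ℕ → SFT R → ℝ, (∀ k, MemBow R μ (φseq k)) →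
      (∀ ε : ℝ, 0 < ε → ∃ N : ℕ, ∀ j k : ℕ, N ≤ j → N ≤ k →
        bowenNorm R μ (φseq j - φseq k) ≤ ε) →
      ∃ φ : SFT R → ℝ, MemBow R μ φ ∧
        Filter.Tendsto (fun k => bowenNorm R μ (φseq k - φ)) Filter.atTop (nhds 0)) :=
  weak_bowen_banach_general R μ hinv
end
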